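/- In the knapsack reduction graph (vertices s, t, v₁,…,v_n; edge s–vᵢ with weight 0, cost M; edge vᵢ–t with weight wᵢ, cost M − cᵢ, where 0 ≤ cᵢ ≤ M), for every s-t cut determined by placing a set A of the vᵢ on the s-side, the cut cost equals n·M − Σ_{vᵢ ∈ A} cᵢ and the cut weight equals Σ_{vᵢ ∈ A} wᵢ. -/
import Mathlib


open Finset

/-- The set of edges of `G` with exactly one endpoint in `S`. -/
def cutSet {V : Type} [Fintype V] [DecidableEq V] (G : SimpleGraph V) [DecidableRel G.Adj]
    (S : Finset V) : Finset (Sym2 V) :=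
  G.edgeFinset.filter fun e => ∃ a b, e = s(a, b) ∧ a ∈ S ∧ b ∉ S

/-- Underlying relation for the knapsack reduction graph: `s = Sum.inr false`,
`t = Sum.inr true`, items `vᵢ = Sum.inl i`; edges `s–vᵢ` and `vᵢ–t`. -/
def knapRel (n : ℕ) (x y : Sum (Fin n) Bool) : Prop :=
  ∃ i : Fin n, x = Sum.inl i ∧ (y = Sum.inr false ∨ y = Sum.inr true)

instance (n : ℕ) : DecidableRel (knapRel n) := fun _ _ => by
  unfold knapRel; infer_instance

/-- The knapsack reduction graph. -/
def knapGraph (n : ℕ) : SimpleGraph (Sum (Fin n) Bool) := SimpleGraph.fromRel (knapRel n)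

instance (n : ℕ) : DecidableRel (knapGraph n).Adj := fun x y =>
  decidable_of_iff (x ≠ y ∧ (knapRel n x y ∨ knapRel n y x)) Iff.rfl

lemma knap_cutSet_eq (n : ℕ) (A : Finset (Fin n)) :
    cutSet (knapGraph n) (insert (Sum.inr false) (A.image Sum.inl)) =
      ((univ \ A).image fun i => s(Sum.inr false, Sum.inl i)) ∪
        (A.image fun i => s(Sum.inl i, Sum.inr true)) := by
  ext e
  simp only [cutSet, mem_filter, SimpleGraph.mem_edgeFinset, mem_union, mem_image,
    mem_sdiff, mem_univ, true_and]
  constructor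
  · rintro ⟨he, a, b, rfl, haS, hbS⟩
    rw [SimpleGraph.mem_edgeSet] at he
    have hadj : a ≠ b ∧ (knapRel n a b ∨ knapRel n b a) := he
    obtain ⟨hne, h | h⟩ := hadj
    · obtain ⟨i, rfl, hb⟩ := h
      have hiA : i ∈ A := by
        rcases mem_insert.1 haS with h | h
        · exact absurd h (by simp)
        · obtain ⟨j, hj, hji⟩ := mem_image.1 h
          cases Sum.inl_injective hji; exact hj
      rcases hb with rfl | rfl
      · exact absurd (mem_insert_self _ _) hbS
      · exact Or.inr ⟨i, hiA, rfl⟩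
    · obtain ⟨i, rfl, ha⟩ := h
      have hiA : i ∉ A := by
        intro hi
        exact hbS (mem_insert_of_mem (mem_image_of_mem _ hi))
      rcases ha with rfl | rfl
      · exact Or.inl ⟨i, hiA, rfl⟩
      · exfalso
        rcases mem_insert.1 haS with h | h
        · simp at h
        · obtain ⟨j, _, hji⟩ := mem_image.1 h
          simp at hji
  · rintro (⟨i, hiA, rfl⟩ | ⟨i, hiA, rfl⟩)
    · refine ⟨?_, Sum.inr false, Sum.inl i, rfl, mem_insert_self _ _, ?_⟩
      · rw [SimpleGraph.mem_edgeSet]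
        exact ⟨by simp, Or.inr ⟨i, rfl, Or.inl rfl⟩⟩
      · intro h
        rcases mem_insert.1 h with h | h
        · simp at h
        · obtain ⟨j, hj, hji⟩ := mem_image.1 h
          cases Sum.inl_injective hji; exact hiA hj
    · refine ⟨?_, Sum.inl i, Sum.inr true, rfl, ?_, ?_⟩
      · rw [SimpleGraph.mem_edgeSet]
        exact ⟨by simp, Or.inl ⟨i, rfl, Or.inr rfl⟩⟩
      · exact mem_insert_of_mem (mem_image_of_mem _ hiA)
      · intro h
        rcases mem_insert.1 h with h | h
        · simp at h
        · obtain ⟨j, _, hji⟩ := mem_image.1 h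
          simp at hji

/-- In the knapsack reduction graph (edge `s–vᵢ` has weight `0`, cost `M`; edge `vᵢ–t`
has weight `w i`, cost `M - c i`), the s-t cut with s-side `{s} ∪ A` has cut cost
`n·M - ∑_{i∈A} c i` and cut weight `∑_{i∈A} w i`. -/
theorem knap_cut_weight_cost (n : ℕ) (w c : Fin n → ℝ) (M : ℝ)
    (hw : ∀ i, 0 ≤ w i) (hc : ∀ i, 0 ≤ c i) (hM : ∀ i, c i ≤ M)
    (W C : Sym2 (Sum (Fin n) Bool) → ℝ)
    (hWs : ∀ i : Fin n, W s(Sum.inr false, Sum.inl i) = 0)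
    (hCs : ∀ i : Fin n, C s(Sum.inr false, Sum.inl i) = M)
    (hWt : ∀ i : Fin n, W s(Sum.inl i, Sum.inr true) = w i)
    (hCt : ∀ i : Fin n, C s(Sum.inl i, Sum.inr true) = M - c i)
    (A : Finset (Fin n)) :
    (∑ e ∈ cutSet (knapGraph n) (insert (Sum.inr false) (A.image Sum.inl)), C e)
        = n * M - ∑ i ∈ A, c i ∧
    (∑ e ∈ cutSet (knapGraph n) (insert (Sum.inr false) (A.image Sum.inl)), W e)
        = ∑ i ∈ A, w i := by
  rw [knap_cutSet_eq]
  have hdisj : Disjoint ((univ \ A).image fun i => s(Sum.inr false, Sum.inl i))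
      (A.image fun i => s(Sum.inl i, Sum.inr true)) := by
    rw [disjoint_left]
    rintro e he1 he2
    obtain ⟨i, _, rfl⟩ := mem_image.1 he1
    obtain ⟨j, _, hj⟩ := mem_image.1 he2
    rw [Sym2.eq_iff] at hj
    rcases hj with ⟨h, _⟩ | ⟨h, _⟩ <;> simp_all
  have hinj1 : Set.InjOn (fun i : Fin n => s(Sum.inr false, Sum.inl i)) (univ \ A : Finset (Fin n)) := by
    intro a _ b _ h
    simp only [Sym2.eq_iff] at h
    rcases h with ⟨_, h⟩ | ⟨h, _⟩ <;> simp_all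
  have hinj2 : Set.InjOn (fun i : Fin n => s(Sum.inl i, Sum.inr true)) (A : Finset (Fin n)) := by
    intro a _ b _ h
    simp only [Sym2.eq_iff] at h
    rcases h with ⟨h, _⟩ | ⟨_, h⟩ <;> simp_all
  have hcard : ((univ \ A).card : ℝ) = n - A.card := by
    rw [card_sdiff_of_subset (subset_univ A), card_univ, Fintype.card_fin,
      Nat.cast_sub (by simpa using card_le_card (subset_univ A))]
  constructor
  · rw [sum_union hdisj, sum_image hinj1, sum_image hinj2]
    simp only [hCs, hCt, sum_const, nsmul_eq_mul, sum_sub_distrib]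
    rw [hcard]
    ring
  · rw [sum_union hdisj, sum_image hinj1, sum_image hinj2]
    simp [hWs, hWt]
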